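/- arXiv:1507.02743 — 2 statements merged into one kernel-verified Lean document; each statement's English description precedes it below -/
import Mathlib

section
/- Let P be a probability distribution on ℝ^d × ℝ^L supported on points z = (x, y) with ‖x‖₂ ≤ R, and such that 0 ≤ ⟨y, y'⟩ ≤ L̄ for any two points in the support. Let n be even, let z_1, …, z_n be i.i.d. samples from P, and let ε_1, …, ε_{n/2} be i.i.d. Rademacher variables independent of the data. Then the Rademacher average of the loss class satisfies R_{n/2}(ℓ̄ ∘ Ã(r)) := E[ sup_{A ∈ Ã(r)} (2/n) Σ_{i=1}^{n/2} ε_i · g(⟨y_i, y_{n/2+i}⟩)·(⟨y_i, y_{n/2+i}⟩ − x_iᵀ A x_{n/2+i})² ] ≤ 2(r R² + L̄) · R_{n/2}(Ã(r)), where R_{n/2}(Ã(r)) := E[ sup_{A ∈ Ã(r)} (2/n) Σ_{i=1}^{n/2} ε_i · x_iᵀ A x_{n/2+i} ]. -/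
open MeasureTheory Finset
open scoped ENNReal

noncomputable section

/-- A labeled data point z = (x, y) ∈ ℝ^d × ℝ^L. -/
abbrev Pt (d L : ℕ) := (Fin d → ℝ) × (Fin L → ℝ)

/-- Inner product ⟨y, y'⟩ of label vectors. -/
def ipY {L : ℕ} (y y' : Fin L → ℝ) : ℝ := ∑ i, y i * y' i

/-- Bilinear form xᵀ A x'. -/
def qForm {d : ℕ} (A : Matrix (Fin d) (Fin d) ℝ) (x x' : Fin d → ℝ) : ℝ :=
  ∑ i, ∑ j, x i * A i j * x' j

/-- Euclidean norm ‖x‖₂. -/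
def norm2 {d : ℕ} (x : Fin d → ℝ) : ℝ := Real.sqrt (∑ i, x i ^ 2)

/-- Frobenius norm ‖A‖_F. -/
def frobNorm {d : ℕ} (A : Matrix (Fin d) (Fin d) ℝ) : ℝ :=
  Real.sqrt (∑ i, ∑ j, (A i j) ^ 2)

/-- Loss ℓ(A; z, z') := g(⟨y, y'⟩)·(⟨y, y'⟩ − xᵀ A x')² + λ·Tr(A). -/
def lossFn {d L : ℕ} (g : ℝ → ℝ) (lam : ℝ) (A : Matrix (Fin d) (Fin d) ℝ)
    (z z' : Pt d L) : ℝ :=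
  g (ipY z.2 z'.2) * (ipY z.2 z'.2 - qForm A z.1 z'.1) ^ 2 + lam * A.trace

/-- Empirical risk L̂(A; D) := (1/(n(n−1))) Σᵢ Σ_{j≠i} ℓ(A; zᵢ, zⱼ). -/
def empRisk {d L : ℕ} (g : ℝ → ℝ) (lam : ℝ) {n : ℕ} (A : Matrix (Fin d) (Fin d) ℝ)
    (D : Fin n → Pt d L) : ℝ :=
  (1 / ((n : ℝ) * ((n : ℝ) - 1))) * ∑ i, ∑ j ∈ univ.erase i, lossFn g lam A (D i) (D j)

/-- Population risk L(A) := E_{z,z' i.i.d. ∼ P}[ℓ(A; z, z')]. -/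
def popRisk {d L : ℕ} (g : ℝ → ℝ) (lam : ℝ) (P : Measure (Pt d L))
    (A : Matrix (Fin d) (Fin d) ℝ) : ℝ :=
  ∫ z, (∫ z', lossFn g lam A z z' ∂P) ∂P

/-- Risk relative to the training set, L̃(A; D) := (1/n) Σₖ E_{z∼P}[ℓ(A; z, zₖ)]. -/
def tilRisk {d L : ℕ} (g : ℝ → ℝ) (lam : ℝ) (P : Measure (Pt d L)) {n : ℕ}
    (A : Matrix (Fin d) (Fin d) ℝ) (D : Fin n → Pt d L) : ℝ :=
  (1 / (n : ℝ)) * ∑ k, ∫ z, lossFn g lam A z (D k) ∂P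

/-- Law of a Rademacher random variable: uniform on {−1, +1}. -/
def radMeasure : Measure ℝ :=
  (2⁻¹ : ℝ≥0∞) • Measure.dirac (-1) + (2⁻¹ : ℝ≥0∞) • Measure.dirac 1


/-!
For a fixed sample, the map `t ↦ g c * (c - t) ^ 2` is `2 (r R² + L̄)`-Lipschitz on the range
`[-r R², r R²]` of the bilinear forms `xᵀ A x'` (Cauchy–Schwarz with `‖A‖_F ≤ r`, `‖x‖, ‖x'‖ ≤ R`),
as soon as `0 ≤ c ≤ L̄` and `0 ≤ g ≤ 1`. The Ledoux–Talagrand contraction principle therefore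
compares the two Rademacher averages sample by sample; it is proved by replacing the functions
one coordinate at a time, pairing each sign pattern with the one that flips that coordinate.
Integrating over the sample gives the bound.
-/

def boolSign (b : Bool) : ℝ := if b then 1 else -1

@[simp] lemma boolSign_true : boolSign true = 1 := rfl

@[simp] lemma boolSign_false : boolSign false = -1 := rfl

lemma boolSign_mul_le_abs (b : Bool) (x : ℝ) : boolSign b * x ≤ |x| := by
  cases b
  · simpa using neg_le_abs x
  · simpa using le_abs_self x

lemma radMeasure_eq_sum :
    radMeasure = ∑ b : Bool, (2⁻¹ : ℝ≥0∞) • Measure.dirac (boolSign b) := by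
  simp [radMeasure, add_comm]

instance : IsProbabilityMeasure radMeasure :=
  ⟨by simp [radMeasure, ENNReal.inv_two_add_inv_two]⟩

lemma pi_radMeasure {ι : Type*} [Fintype ι] [DecidableEq ι] :
    Measure.pi (fun _ : ι => radMeasure) =
      ∑ s : ι → Bool, ((2 : ℝ≥0∞) ^ Fintype.card ι)⁻¹ • Measure.dirac fun i => boolSign (s i) := by
  refine Measure.pi_eq fun t ht => ?_
  simp only [radMeasure_eq_sum, Measure.coe_finsetSum, Finset.sum_apply, Measure.smul_apply,
    Measure.dirac_apply' _ (MeasurableSet.univ_pi ht), Measure.dirac_apply' _ (ht _), smul_eq_mul]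
  rw [← Finset.coe_univ]
  simp only [Set.indicator_pi_one_apply, Fintype.prod_sum, Finset.prod_mul_distrib,
    Finset.prod_const, Finset.card_univ, ENNReal.inv_pow]

lemma integral_pi_radMeasure {ι : Type*} [Fintype ι] [DecidableEq ι] (f : (ι → ℝ) → ℝ) :
    ∫ ε, f ε ∂(Measure.pi fun _ : ι => radMeasure) =
      (2 ^ Fintype.card ι)⁻¹ * ∑ s : ι → Bool, f fun i => boolSign (s i) := by
  rw [pi_radMeasure, integral_finsetSum_measure fun s _ =>
    (integrable_dirac (by simp)).smul_measure (by simp), Finset.mul_sum]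
  simp [integral_smul_measure, ENNReal.toReal_inv]

lemma integral_pi_radMeasure_le {ι : Type*} [Fintype ι] [DecidableEq ι] {f : (ι → ℝ) → ℝ}
    {C : ℝ} (hf : ∀ s : ι → Bool, f (fun i => boolSign (s i)) ≤ C) :
    ∫ ε, f ε ∂(Measure.pi fun _ : ι => radMeasure) ≤ C := by
  rw [integral_pi_radMeasure]
  calc (2 ^ Fintype.card ι)⁻¹ * ∑ s : ι → Bool, f (fun i => boolSign (s i))
      ≤ (2 ^ Fintype.card ι)⁻¹ * ∑ _s : ι → Bool, C := by gcongr with s; exact hf s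
    _ = C := by simp

section Contraction

variable {K : Type*}

lemma bddAbove_range_add_sum_boolSign_mul {ι : Type*} [Fintype ι] {h : K → ℝ}
    (hh : BddAbove (Set.range h)) {φ : ι → K → ℝ} {M : ℝ} (hφ : ∀ i a, |φ i a| ≤ M)
    (s : ι → Bool) : BddAbove (Set.range fun a => h a + ∑ i, boolSign (s i) * φ i a) := by
  obtain ⟨C, hC⟩ := hh
  refine ⟨C + ∑ _i : ι, M, Set.forall_mem_range.2 fun a => ?_⟩
  exact add_le_add (hC (Set.mem_range_self a))
    (Finset.sum_le_sum fun i _ => (boolSign_mul_le_abs _ _).trans (hφ i a))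

lemma sum_bool_iSup_add_boolSign_mul_le [Nonempty K] {F u v : K → ℝ} {M : ℝ}
    (huv : ∀ a b, |u a - u b| ≤ |v a - v b|) (hF : BddAbove (Set.range F))
    (hv : ∀ a, |v a| ≤ M) :
    ∑ b : Bool, ⨆ a, F a + boolSign b * u a ≤ ∑ b : Bool, ⨆ a, F a + boolSign b * v a := by
  simp only [Fintype.sum_bool, boolSign_true, boolSign_false, one_mul, neg_one_mul]
  have hbdd (b : Bool) :=
    bddAbove_range_add_sum_boolSign_mul (ι := Unit) hF (fun _ => hv) fun _ => b
  have hpos : BddAbove (Set.range fun a => F a + v a) := by simpa using hbdd true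
  have hneg : BddAbove (Set.range fun a => F a + -v a) := by simpa using hbdd false
  set C := (⨆ a, F a + v a) + ⨆ a, F a + -v a
  -- `u a - u b ≤ |v a - v b|`, so the pair `(a, b)` is dominated by `(a, b)` or by `(b, a)`.
  have key : ∀ a b, (F a + u a) + (F b + -u b) ≤ C := by
    intro a b
    have hu := (le_abs_self _).trans (huv a b)
    rcases le_total (v b) (v a) with hab | hab
    · rw [abs_of_nonneg (sub_nonneg.2 hab)] at hu
      linarith [le_ciSup hpos a, le_ciSup hneg b]
    · rw [abs_of_nonpos (sub_nonpos.2 hab)] at hu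
      linarith [le_ciSup hpos b, le_ciSup hneg a]
  have : (⨆ a, F a + u a) ≤ C - ⨆ b, F b + -u b :=
    ciSup_le fun a => le_sub_comm.1 (ciSup_le fun b => by linarith [key a b])
  linarith

lemma sum_boolSign_fin_succ {m : ℕ} (f : (Fin (m + 1) → Bool) → ℝ) :
    ∑ s, f s = ∑ s : Fin m → Bool, ∑ b : Bool, f (Fin.cons b s) := by
  rw [← (Fin.consEquiv fun _ => Bool).sum_comp, Fintype.sum_prod_type, Finset.sum_comm]
  rfl

lemma sum_iSup_add_sum_boolSign_mul_fin_succ {m : ℕ} (h : K → ℝ) (χ : Fin (m + 1) → K → ℝ) :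
    ∑ s : Fin (m + 1) → Bool, ⨆ a, h a + ∑ i, boolSign (s i) * χ i a =
      ∑ s : Fin m → Bool, ∑ b : Bool,
        ⨆ a, (h a + boolSign b * χ 0 a) + ∑ i, boolSign (s i) * χ i.succ a := by
  simp [sum_boolSign_fin_succ, Fin.sum_univ_succ, add_assoc]

/-- The offset `h` is what makes the statement strong enough to induct on the number of
coordinates. -/
theorem sum_iSup_add_sum_boolSign_mul_le [Nonempty K] {m : ℕ} (h : K → ℝ)
    (φ ψ : Fin m → K → ℝ) {Mφ Mψ : ℝ} (hh : BddAbove (Set.range h))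
    (hφψ : ∀ i a b, |φ i a - φ i b| ≤ |ψ i a - ψ i b|)
    (hφ : ∀ i a, |φ i a| ≤ Mφ) (hψ : ∀ i a, |ψ i a| ≤ Mψ) :
    ∑ s : Fin m → Bool, ⨆ a, h a + ∑ i, boolSign (s i) * φ i a ≤
      ∑ s : Fin m → Bool, ⨆ a, h a + ∑ i, boolSign (s i) * ψ i a := by
  induction m generalizing h with
  | zero => simp
  | succ m ih =>
    have hh' (b : Bool) : BddAbove (Set.range fun a => h a + boolSign b * φ 0 a) := by
      simpa using bddAbove_range_add_sum_boolSign_mul (ι := Unit) hh (fun _ => hφ 0) fun _ => b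
    rw [sum_iSup_add_sum_boolSign_mul_fin_succ, sum_iSup_add_sum_boolSign_mul_fin_succ]
    calc ∑ s : Fin m → Bool, ∑ b : Bool,
          ⨆ a, (h a + boolSign b * φ 0 a) + ∑ i, boolSign (s i) * φ i.succ a
        ≤ ∑ s : Fin m → Bool, ∑ b : Bool,
          ⨆ a, (h a + boolSign b * φ 0 a) + ∑ i, boolSign (s i) * ψ i.succ a := by
          rw [Finset.sum_comm, Finset.sum_comm (γ := Fin m → Bool)]
          exact Finset.sum_le_sum fun b _ => ih _ (fun i => φ i.succ) (fun i => ψ i.succ)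
            (hh' b) (fun i => hφψ _) (fun i => hφ _) (fun i => hψ _)
      _ = ∑ s : Fin m → Bool, ∑ b : Bool,
          ⨆ a, (h a + ∑ i, boolSign (s i) * ψ i.succ a) + boolSign b * φ 0 a := by
          simp only [add_right_comm (h _) (boolSign _ * _)]
      _ ≤ ∑ s : Fin m → Bool, ∑ b : Bool,
          ⨆ a, (h a + ∑ i, boolSign (s i) * ψ i.succ a) + boolSign b * ψ 0 a :=
          Finset.sum_le_sum fun s _ => sum_bool_iSup_add_boolSign_mul_le (hφψ 0)
            (bddAbove_range_add_sum_boolSign_mul hh (fun i => hψ i.succ) s) (hψ 0)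
      _ = ∑ s : Fin m → Bool, ∑ b : Bool,
          ⨆ a, (h a + boolSign b * ψ 0 a) + ∑ i, boolSign (s i) * ψ i.succ a := by
          simp only [add_right_comm (h _) (Finset.sum _ _)]

theorem rademacher_contraction [Nonempty K] {m : ℕ} (φ ψ : Fin m → K → ℝ) {L Mφ Mψ : ℝ}
    (hL : 0 ≤ L) (hlip : ∀ i a b, |φ i a - φ i b| ≤ L * |ψ i a - ψ i b|)
    (hφ : ∀ i a, |φ i a| ≤ Mφ) (hψ : ∀ i a, |ψ i a| ≤ Mψ) :
    ∫ ε, ⨆ a, ∑ i, ε i * φ i a ∂(Measure.pi fun _ : Fin m => radMeasure) ≤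
      L * ∫ ε, ⨆ a, ∑ i, ε i * ψ i a ∂(Measure.pi fun _ : Fin m => radMeasure) := by
  have key := sum_iSup_add_sum_boolSign_mul_le 0 φ (fun i a => L * ψ i a) (by simp)
    (fun i a b => by rw [← mul_sub, abs_mul, abs_of_nonneg hL]; exact hlip i a b) hφ
    (fun i a => by rw [abs_mul, abs_of_nonneg hL]; exact mul_le_mul_of_nonneg_left (hψ i a) hL)
  simp only [Pi.zero_apply, zero_add] at key
  rw [integral_pi_radMeasure, integral_pi_radMeasure, mul_left_comm]
  refine mul_le_mul_of_nonneg_left (key.trans_eq ?_) (by positivity)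
  simp only [Finset.mul_sum, Real.mul_iSup_of_nonneg hL, mul_left_comm L]

end Contraction

lemma Measurable.iSup_of_continuous {α K : Type*} [MeasurableSpace α] [TopologicalSpace K]
    [TopologicalSpace.SeparableSpace K] {f : α → K → ℝ} (hm : ∀ a, Measurable fun x => f x a)
    (hc : ∀ x, Continuous (f x)) : Measurable fun x => ⨆ a, f x a := by
  obtain ⟨D, hDc, hD⟩ := TopologicalSpace.exists_countable_dense K
  have := hDc.to_subtype
  simp_rw [← hD.ciSup' (hc _)]
  exact Measurable.iSup fun a => hm a

lemma measurable_integral_iSup_pi_radMeasure {Ω K ι : Type*} [MeasurableSpace Ω]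
    [TopologicalSpace K] [TopologicalSpace.SeparableSpace K] [Fintype ι] [DecidableEq ι]
    (F : Ω → K → (ι → ℝ) → ℝ) (hm : ∀ a ε, Measurable fun ω => F ω a ε)
    (hc : ∀ ω ε, Continuous fun a => F ω a ε) :
    Measurable fun ω => ∫ ε, ⨆ a, F ω a ε ∂(Measure.pi fun _ : ι => radMeasure) := by
  simp_rw [integral_pi_radMeasure]
  refine (Finset.measurable_sum _ fun s _ => ?_).const_mul _
  exact Measurable.iSup_of_continuous (fun a => hm a _) fun ω => hc ω _

lemma integral_le_of_ae_le_of_integrable {Ω : Type*} [MeasurableSpace Ω] {μ : Measure Ω}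
    {f g : Ω → ℝ} (hg : Integrable g μ) (hg₀ : 0 ≤ᵐ[μ] g) (hfg : f ≤ᵐ[μ] g) :
    ∫ ω, f ω ∂μ ≤ ∫ ω, g ω ∂μ := by
  by_cases hf : Integrable f μ
  · exact integral_mono_ae hf hg hfg
  · exact (integral_undef hf).trans_le (integral_nonneg_of_ae hg₀)

lemma abs_mul_sq_sub_mul_sq_le {w c q q' B Lbar : ℝ} (hw₀ : 0 ≤ w) (hw₁ : w ≤ 1) (hc₀ : 0 ≤ c)
    (hc₁ : c ≤ Lbar) (hq : |q| ≤ B) (hq' : |q'| ≤ B) :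
    |w * (c - q) ^ 2 - w * (c - q') ^ 2| ≤ 2 * (B + Lbar) * |q - q'| := by
  have hfactor : w * (c - q) ^ 2 - w * (c - q') ^ 2 = w * ((q' - q) * (2 * c - q - q')) := by
    ring
  have hsum : |2 * c - q - q'| ≤ 2 * (B + Lbar) := by
    rw [abs_le] at hq hq' ⊢
    constructor <;> linarith
  rw [hfactor, abs_mul, abs_mul, abs_of_nonneg hw₀, abs_sub_comm q']
  calc w * (|q - q'| * |2 * c - q - q'|) ≤ 1 * (|q - q'| * (2 * (B + Lbar))) := by gcongr
    _ = 2 * (B + Lbar) * |q - q'| := by ring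

theorem integral_iSup_weighted_sq_loss_le {K : Type*} [Nonempty K] {m : ℕ}
    (t : K → Fin m → ℝ) (c : Fin m → ℝ) (g : ℝ → ℝ) (hg : ∀ x, 0 ≤ g x ∧ g x ≤ 1)
    {coef B Lbar : ℝ} (hcoef : 0 ≤ coef) (hB : 0 ≤ B) (hLbar : 0 ≤ Lbar)
    (ht : ∀ a i, |t a i| ≤ B) (hc : ∀ i, 0 ≤ c i ∧ c i ≤ Lbar) :
    ∫ ε, ⨆ a, coef * ∑ i, ε i * g (c i) * (c i - t a i) ^ 2
        ∂(Measure.pi fun _ : Fin m => radMeasure) ≤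
      2 * (B + Lbar) * ∫ ε, ⨆ a, coef * ∑ i, ε i * t a i
        ∂(Measure.pi fun _ : Fin m => radMeasure) := by
  have hcoef_sum (u ε : Fin m → ℝ) : coef * ∑ i, ε i * u i = ∑ i, ε i * (coef * u i) := by
    rw [Finset.mul_sum]
    exact Finset.sum_congr rfl fun i _ => by ring
  have hscale (x y : ℝ) : |coef * x - coef * y| = coef * |x - y| := by
    rw [← mul_sub, abs_mul, abs_of_nonneg hcoef]
  simp only [mul_assoc _ (g _), hcoef_sum]
  refine rademacher_contraction _ _ (Mφ := coef * (B + Lbar) ^ 2) (Mψ := coef * B)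
    (by positivity) (fun i a b => ?_) (fun i a => ?_) (fun i a => ?_)
  · rw [hscale, hscale, mul_left_comm]
    exact mul_le_mul_of_nonneg_left (abs_mul_sq_sub_mul_sq_le (hg _).1 (hg _).2 (hc i).1
      (hc i).2 (ht a i) (ht b i)) hcoef
  · have hw := hg (c i)
    have hdev : |c i - t a i| ≤ B + Lbar := by
      have := abs_le.1 (ht a i)
      exact abs_le.2 ⟨by linarith [(hc i).1], by linarith [(hc i).2]⟩
    rw [abs_mul, abs_of_nonneg hcoef, abs_of_nonneg (by nlinarith [sq_nonneg (c i - t a i)])]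
    refine mul_le_mul_of_nonneg_left ?_ hcoef
    calc g (c i) * (c i - t a i) ^ 2 ≤ 1 * (B + Lbar) ^ 2 :=
          mul_le_mul hw.2 (sq_le_sq' (abs_le.1 hdev).1 (abs_le.1 hdev).2) (sq_nonneg _)
            zero_le_one
      _ = (B + Lbar) ^ 2 := one_mul _
  · rw [abs_mul, abs_of_nonneg hcoef]
    exact mul_le_mul_of_nonneg_left (ht a i) hcoef

theorem integral_integral_iSup_weighted_sq_loss_le {Ω K : Type*} [MeasurableSpace Ω]
    {μ : Measure Ω} [IsProbabilityMeasure μ] [TopologicalSpace K]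
    [TopologicalSpace.SeparableSpace K] {m : ℕ} (t : K → Ω → Fin m → ℝ) (c : Ω → Fin m → ℝ)
    (g : ℝ → ℝ) (hg : ∀ x, 0 ≤ g x ∧ g x ≤ 1) {coef B Lbar : ℝ} (hcoef : 0 ≤ coef)
    (hB : 0 ≤ B) (hLbar : 0 ≤ Lbar) (a₀ : K) (ht₀ : ∀ ω, t a₀ ω = 0)
    (htm : ∀ a, Measurable (t a)) (htc : ∀ ω, Continuous fun a => t a ω)
    (hbound : ∀ᵐ ω ∂μ, (∀ a i, |t a ω i| ≤ B) ∧ ∀ i, 0 ≤ c ω i ∧ c ω i ≤ Lbar) :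
    ∫ ω, ∫ ε, ⨆ a, coef * ∑ i, ε i * g (c ω i) * (c ω i - t a ω i) ^ 2
        ∂(Measure.pi fun _ : Fin m => radMeasure) ∂μ ≤
      2 * (B + Lbar) * ∫ ω, ∫ ε, ⨆ a, coef * ∑ i, ε i * t a ω i
        ∂(Measure.pi fun _ : Fin m => radMeasure) ∂μ := by
  have : Nonempty K := ⟨a₀⟩
  set G := fun ω =>
    ∫ ε, ⨆ a, coef * ∑ i, ε i * t a ω i ∂(Measure.pi fun _ : Fin m => radMeasure)
  have hG₀ (ω : Ω) : 0 ≤ G ω := integral_nonneg fun ε => Real.iSup_nonneg' ⟨a₀, by simp [ht₀]⟩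
  have hG_meas : Measurable G := measurable_integral_iSup_pi_radMeasure _
    (fun a ε => by fun_prop) (fun ω ε => by fun_prop)
  have hG_le : ∀ᵐ ω ∂μ, G ω ≤ coef * (m * B) := by
    filter_upwards [hbound] with ω hω
    refine integral_pi_radMeasure_le fun s => ciSup_le fun a => ?_
    gcongr
    calc ∑ i, boolSign (s i) * t a ω i ≤ ∑ _i : Fin m, B :=
          Finset.sum_le_sum fun i _ => (boolSign_mul_le_abs _ _).trans (hω.1 a i)
      _ = m * B := by simp
  have hG_int : Integrable G μ := (integrable_const (coef * (m * B))).mono'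
    hG_meas.aestronglyMeasurable (by
      filter_upwards [hG_le] with ω hω
      rwa [Real.norm_of_nonneg (hG₀ ω)])
  rw [← integral_const_mul]
  refine integral_le_of_ae_le_of_integrable (hG_int.const_mul _)
    (ae_of_all _ fun ω => mul_nonneg (by positivity) (hG₀ ω)) ?_
  filter_upwards [hbound] with ω hω
  exact integral_iSup_weighted_sq_loss_le (fun a => t a ω) (c ω) g hg hcoef hB hLbar hω.1 hω.2

lemma norm2_nonneg {d : ℕ} (x : Fin d → ℝ) : 0 ≤ norm2 x := Real.sqrt_nonneg _

lemma abs_qForm_le {d : ℕ} (A : Matrix (Fin d) (Fin d) ℝ) (x x' : Fin d → ℝ) :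
    |qForm A x x'| ≤ frobNorm A * norm2 x * norm2 x' := by
  -- Cauchy–Schwarz over the index set `Fin d × Fin d`.
  have hq : qForm A x x' = ∑ p : Fin d × Fin d, A p.1 p.2 * (x p.1 * x' p.2) := by
    rw [qForm, Fintype.sum_prod_type]
    exact Finset.sum_congr rfl fun i _ => Finset.sum_congr rfl fun j _ => by ring
  have hx : ∑ p : Fin d × Fin d, (x p.1 * x' p.2) ^ 2 = (∑ i, x i ^ 2) * ∑ j, x' j ^ 2 := by
    simp only [Fintype.sum_prod_type, mul_pow, Finset.sum_mul_sum]
  rw [frobNorm, norm2, norm2, ← Real.sqrt_mul (by positivity), ← Real.sqrt_mul (by positivity),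
    mul_assoc, ← hx, ← Fintype.sum_prod_type' (fun i j => A i j ^ 2)]
  exact Real.abs_le_sqrt (hq ▸ Finset.sum_mul_sq_le_sq_mul_sq _ _ _)

lemma abs_qForm_le_mul_sq {d : ℕ} {A : Matrix (Fin d) (Fin d) ℝ} {x x' : Fin d → ℝ} {r R : ℝ}
    (hA : frobNorm A ≤ r) (hx : norm2 x ≤ R) (hx' : norm2 x' ≤ R) :
    |qForm A x x'| ≤ r * R ^ 2 := by
  have hr : 0 ≤ r := (Real.sqrt_nonneg _).trans hA
  calc |qForm A x x'| ≤ frobNorm A * norm2 x * norm2 x' := abs_qForm_le A x x'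
    _ ≤ r * R * R := mul_le_mul (mul_le_mul hA hx (norm2_nonneg x) hr) hx' (norm2_nonneg x')
      (mul_nonneg hr ((norm2_nonneg x).trans hx))
    _ = r * R ^ 2 := by ring

lemma continuous_qForm {d : ℕ} (x x' : Fin d → ℝ) :
    Continuous fun A : Matrix (Fin d) (Fin d) ℝ => qForm A x x' := by
  unfold qForm
  fun_prop

instance {m n R : Type*} [Finite m] [Finite n] [TopologicalSpace R]
    [SecondCountableTopology R] : SecondCountableTopology (Matrix m n R) :=
  inferInstanceAs (SecondCountableTopology (m → n → R))

theorem stmt10 {d L : ℕ} {r R Lbar : ℝ} (hr : 0 < r) (hLbar : 0 ≤ Lbar)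
    (g : ℝ → ℝ) (hg : ∀ t, 0 ≤ g t ∧ g t ≤ 1)
    (P : Measure (Pt d L)) [IsProbabilityMeasure P]
    (S : Set (Pt d L)) (hSm : MeasurableSet S) (hS1 : P S = 1)
    (hSx : ∀ z ∈ S, norm2 z.1 ≤ R)
    (hSy : ∀ z ∈ S, ∀ z' ∈ S, 0 ≤ ipY z.2 z'.2 ∧ ipY z.2 z'.2 ≤ Lbar)
    (m : ℕ) :
    (∫ z, (∫ eps, (⨆ A : {A : Matrix (Fin d) (Fin d) ℝ // A.PosSemidef ∧ frobNorm A ≤ r},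
        (2 / ((2 * m : ℕ) : ℝ)) * ∑ i : Fin m,
          eps i * g (ipY (z (⟨(i : ℕ), by have := i.isLt; omega⟩ : Fin (2 * m))).2
                         (z (⟨m + (i : ℕ), by have := i.isLt; omega⟩ : Fin (2 * m))).2) *
            (ipY (z (⟨(i : ℕ), by have := i.isLt; omega⟩ : Fin (2 * m))).2
                 (z (⟨m + (i : ℕ), by have := i.isLt; omega⟩ : Fin (2 * m))).2 -
             qForm A.1 (z (⟨(i : ℕ), by have := i.isLt; omega⟩ : Fin (2 * m))).1
                       (z (⟨m + (i : ℕ), by have := i.isLt; omega⟩ : Fin (2 * m))).1) ^ 2)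
        ∂(Measure.pi fun _ : Fin m => radMeasure))
      ∂(Measure.pi fun _ : Fin (2 * m) => P)) ≤
    2 * (r * R ^ 2 + Lbar) *
      ∫ z, (∫ eps, (⨆ A : {A : Matrix (Fin d) (Fin d) ℝ // A.PosSemidef ∧ frobNorm A ≤ r},
        (2 / ((2 * m : ℕ) : ℝ)) * ∑ i : Fin m,
          eps i * qForm A.1 (z (⟨(i : ℕ), by have := i.isLt; omega⟩ : Fin (2 * m))).1
                           (z (⟨m + (i : ℕ), by have := i.isLt; omega⟩ : Fin (2 * m))).1)
        ∂(Measure.pi fun _ : Fin m => radMeasure))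
      ∂(Measure.pi fun _ : Fin (2 * m) => P) := by
  -- The subtype instances are stated for `↥s` with `s` a set.
  have : TopologicalSpace.SeparableSpace
      {A : Matrix (Fin d) (Fin d) ℝ // A.PosSemidef ∧ frobNorm A ≤ r} :=
    inferInstanceAs (TopologicalSpace.SeparableSpace
      {A : Matrix (Fin d) (Fin d) ℝ | A.PosSemidef ∧ frobNorm A ≤ r})
  have hsupp : ∀ᵐ z ∂(Measure.pi fun _ : Fin (2 * m) => P), ∀ k, z k ∈ S :=
    ae_all_iff.2 fun k => Measure.tendsto_eval_ae_ae ((mem_ae_iff_prob_eq_one hSm).2 hS1)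
  refine integral_integral_iSup_weighted_sq_loss_le (Ω := Fin (2 * m) → Pt d L)
    (K := {A : Matrix (Fin d) (Fin d) ℝ // A.PosSemidef ∧ frobNorm A ≤ r})
    (coef := 2 / ((2 * m : ℕ) : ℝ)) (B := r * R ^ 2) (fun A z i => qForm A.1 (z ⟨i, by omega⟩).1 (z ⟨m + i, by omega⟩).1)
    (fun z i => ipY (z ⟨i, by omega⟩).2 (z ⟨m + i, by omega⟩).2) g hg (by positivity)
    (by positivity) hLbar ⟨0, .zero, by simp [frobNorm, hr.le]⟩
    (fun z => funext fun i => by simp [qForm]) (fun A => by unfold qForm; fun_prop)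
    (fun z => continuous_pi fun i => (continuous_qForm _ _).comp continuous_subtype_val) ?_
  filter_upwards [hsupp] with z hz
  exact ⟨fun A i => abs_qForm_le_mul_sq A.2.2 (hSx _ (hz _)) (hSx _ (hz _)),
    fun i => hSy _ (hz _) _ (hz _)⟩

end
end

section
/- Let A be a real symmetric positive semidefinite d×d matrix with ‖A‖_F ≤ r, and let P be a probability distribution on ℝ^d × ℝ^L supported on points z = (x, y) with ‖x‖₂ ≤ R, and such that 0 ≤ ⟨y, y'⟩ ≤ L̄ for any two points in the support. Let D = (z_1, …, z_n) and D^i be two datasets of points from the support of P differing only in the i-th point. Then |L̃(A; D) − L̃(A; D^i)| ≤ 4(L̄² + r² R⁴)/n, where L̃(A; D) := (1/n) Σ_{k=1}^n E_{z ∼ P}[ℓ(A; z, z_k)]. -/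
open MeasureTheory Finset
open scoped ENNReal

noncomputable section

lemma qForm_abs_le {d : ℕ} (A : Matrix (Fin d) (Fin d) ℝ) (x x' : Fin d → ℝ) :
    |qForm A x x'| ≤ frobNorm A * (norm2 x * norm2 x') := by
  have hq : qForm A x x' = ∑ p : Fin d × Fin d, A p.1 p.2 * (x p.1 * x' p.2) := by
    rw [Fintype.sum_prod_type, qForm]
    exact Finset.sum_congr rfl fun i _ => Finset.sum_congr rfl fun j _ => by ring
  have hcs := Finset.sum_mul_sq_le_sq_mul_sq Finset.univ
    (fun p : Fin d × Fin d => A p.1 p.2) (fun p => x p.1 * x' p.2)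
  have h1 : ∑ p : Fin d × Fin d, (A p.1 p.2) ^ 2 = ∑ i, ∑ j, (A i j) ^ 2 :=
    Fintype.sum_prod_type ..
  have h2 : ∑ p : Fin d × Fin d, (x p.1 * x' p.2) ^ 2 = (∑ i, x i ^ 2) * (∑ i, x' i ^ 2) := by
    rw [Fintype.sum_prod_type, Finset.sum_mul_sum]
    exact Finset.sum_congr rfl fun i _ => Finset.sum_congr rfl fun j _ => by ring
  rw [hq]
  calc |∑ p : Fin d × Fin d, A p.1 p.2 * (x p.1 * x' p.2)|
      = Real.sqrt ((∑ p : Fin d × Fin d, A p.1 p.2 * (x p.1 * x' p.2)) ^ 2) := by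
        rw [Real.sqrt_sq_eq_abs]
    _ ≤ Real.sqrt ((∑ i, ∑ j, (A i j) ^ 2) * ((∑ i, x i ^ 2) * (∑ i, x' i ^ 2))) := by
        apply Real.sqrt_le_sqrt; rw [← h1, ← h2]; exact hcs
    _ = frobNorm A * (norm2 x * norm2 x') := by
        rw [frobNorm, norm2, norm2, Real.sqrt_mul (by positivity), Real.sqrt_mul (by positivity)]

lemma loss_meas {d L : ℕ} (g : ℝ → ℝ) (hgm : Measurable g) (lam : ℝ)
    (A : Matrix (Fin d) (Fin d) ℝ) (z0 : Pt d L) :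
    Measurable (fun z : Pt d L => lossFn g lam A z z0) := by
  have h1 : Measurable (fun z : Pt d L => ipY z.2 z0.2) := by
    unfold ipY
    exact Finset.measurable_sum _ fun i _ =>
      ((measurable_pi_apply i).comp measurable_snd).mul measurable_const
  have h2 : Measurable (fun z : Pt d L => qForm A z.1 z0.1) := by
    unfold qForm
    refine Finset.measurable_sum _ fun i _ => Finset.measurable_sum _ fun j _ => ?_
    exact (((measurable_pi_apply i).comp measurable_fst).mul measurable_const).mul measurable_const
  exact (((hgm.comp h1).mul ((h1.sub h2).pow measurable_const)).add measurable_const)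

theorem stmt14 {d L : ℕ} {lam r R Lbar : ℝ} (hlam : 0 < lam) (hr : 0 < r) (hR : 0 < R)
    (hLbar : 0 ≤ Lbar)
    (g : ℝ → ℝ) (hgm : Measurable g) (hg : ∀ t, 0 ≤ g t ∧ g t ≤ 1)
    (A : Matrix (Fin d) (Fin d) ℝ) (hA : A.PosSemidef) (hAr : frobNorm A ≤ r)
    (P : Measure (Pt d L)) [IsProbabilityMeasure P]
    (S : Set (Pt d L)) (hSm : MeasurableSet S) (hS1 : P S = 1)
    (hSx : ∀ z ∈ S, norm2 z.1 ≤ R)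
    (hSy : ∀ z ∈ S, ∀ z' ∈ S, 0 ≤ ipY z.2 z'.2 ∧ ipY z.2 z'.2 ≤ Lbar)
    {n : ℕ} (hn : 2 ≤ n) (i : Fin n) (D D' : Fin n → Pt d L)
    (hDS : ∀ j, D j ∈ S) (hD'S : ∀ j, D' j ∈ S)
    (hdiff : ∀ j : Fin n, j ≠ i → D j = D' j) :
    |tilRisk g lam P A D - tilRisk g lam P A D'| ≤
      4 * (Lbar ^ 2 + r ^ 2 * R ^ 4) / n := by
  have hn0 : (0:ℝ) < n := by
    have : (2:ℝ) ≤ n := by exact_mod_cast hn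
    linarith
  set C : ℝ := Lbar ^ 2 + r ^ 2 * R ^ 4 with hCdef
  have hC0 : 0 ≤ C := by positivity
  -- pointwise bounds
  have hfrob0 : 0 ≤ frobNorm A := Real.sqrt_nonneg _
  have hkey : ∀ z ∈ S, ∀ z0 ∈ S,
      0 ≤ g (ipY z.2 z0.2) * (ipY z.2 z0.2 - qForm A z.1 z0.1) ^ 2 ∧
      g (ipY z.2 z0.2) * (ipY z.2 z0.2 - qForm A z.1 z0.1) ^ 2 ≤ 2 * C := by
    intro z hz z0 hz0
    obtain ⟨ha0, haL⟩ := hSy z hz z0 hz0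
    have hq := qForm_abs_le A z.1 z0.1
    have hx : norm2 z.1 ≤ R := hSx z hz
    have hx0 : norm2 z0.1 ≤ R := hSx z0 hz0
    have hxn : 0 ≤ norm2 z.1 := Real.sqrt_nonneg _
    have hx0n : 0 ≤ norm2 z0.1 := Real.sqrt_nonneg _
    have hqb : |qForm A z.1 z0.1| ≤ r * R ^ 2 := by
      calc |qForm A z.1 z0.1| ≤ frobNorm A * (norm2 z.1 * norm2 z0.1) := hq
        _ ≤ frobNorm A * (R * R) := by
            apply mul_le_mul_of_nonneg_left (mul_le_mul hx hx0 hx0n hR.le) hfrob0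
        _ ≤ r * (R * R) := by
            apply mul_le_mul_of_nonneg_right hAr (by positivity)
        _ = r * R ^ 2 := by ring
    have hqb1 : -(r * R ^ 2) ≤ qForm A z.1 z0.1 := neg_le_of_abs_le hqb
    have hqb2 : qForm A z.1 z0.1 ≤ r * R ^ 2 := le_of_abs_le hqb
    have hsq : (ipY z.2 z0.2 - qForm A z.1 z0.1) ^ 2 ≤ 2 * C := by
      have hq2 : (qForm A z.1 z0.1) ^ 2 ≤ (r * R ^ 2) ^ 2 := sq_le_sq' hqb1 hqb2
      rw [hCdef]
      nlinarith [hq2, sq_nonneg (Lbar - r * R ^ 2),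
        mul_le_mul_of_nonneg_left hqb1 ha0,
        mul_le_mul_of_nonneg_right haL (by positivity : (0:ℝ) ≤ r * R ^ 2)]
    obtain ⟨hg0, hg1⟩ := hg (ipY z.2 z0.2)
    constructor
    · positivity
    · calc g (ipY z.2 z0.2) * (ipY z.2 z0.2 - qForm A z.1 z0.1) ^ 2
          ≤ 1 * (ipY z.2 z0.2 - qForm A z.1 z0.1) ^ 2 := by
            apply mul_le_mul_of_nonneg_right hg1 (sq_nonneg _)
        _ ≤ 2 * C := by rw [one_mul]; exact hsq
  have hae : ∀ᵐ z ∂P, z ∈ S := by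
    rw [ae_iff]
    have : {z : Pt d L | ¬ z ∈ S} = Sᶜ := rfl
    rw [this, prob_compl_eq_zero_iff hSm]
    exact hS1
  -- integrability
  have hint : ∀ z0 ∈ S, Integrable (fun z => lossFn g lam A z z0) P := by
    intro z0 hz0
    refine Integrable.mono' (integrable_const (2 * C + |lam * A.trace|))
      (loss_meas g hgm lam A z0).aestronglyMeasurable ?_
    filter_upwards [hae] with z hz
    obtain ⟨h1, h2⟩ := hkey z hz z0 hz0
    rw [Real.norm_eq_abs, lossFn]
    calc |g (ipY z.2 z0.2) * (ipY z.2 z0.2 - qForm A z.1 z0.1) ^ 2 + lam * A.trace|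
        ≤ |g (ipY z.2 z0.2) * (ipY z.2 z0.2 - qForm A z.1 z0.1) ^ 2| + |lam * A.trace| :=
          abs_add_le _ _
      _ ≤ 2 * C + |lam * A.trace| := by rw [abs_of_nonneg h1]; linarith
  -- the sums differ only at index i
  have hsum : (∑ k, ∫ z, lossFn g lam A z (D k) ∂P) - (∑ k, ∫ z, lossFn g lam A z (D' k) ∂P)
      = (∫ z, lossFn g lam A z (D i) ∂P) - (∫ z, lossFn g lam A z (D' i) ∂P) := by
    rw [← Finset.sum_sub_distrib]
    rw [Finset.sum_eq_single i]
    · intro k _ hk; rw [hdiff k hk]; ring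
    · intro h; exact absurd (Finset.mem_univ i) h
  have hdiffint : (∫ z, lossFn g lam A z (D i) ∂P) - (∫ z, lossFn g lam A z (D' i) ∂P)
      = ∫ z, (lossFn g lam A z (D i) - lossFn g lam A z (D' i)) ∂P :=
    (integral_sub (hint _ (hDS i)) (hint _ (hD'S i))).symm
  have hbound : |∫ z, (lossFn g lam A z (D i) - lossFn g lam A z (D' i)) ∂P| ≤ 2 * C := by
    have := norm_integral_le_of_norm_le_const (μ := P) (C := 2 * C)
      (f := fun z => lossFn g lam A z (D i) - lossFn g lam A z (D' i)) ?_
    · rw [Real.norm_eq_abs] at this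
      simpa using this
    · filter_upwards [hae] with z hz
      rw [Real.norm_eq_abs]
      obtain ⟨h10, h1b⟩ := hkey z hz (D i) (hDS i)
      obtain ⟨h20, h2b⟩ := hkey z hz (D' i) (hD'S i)
      rw [lossFn, lossFn]
      rw [abs_sub_le_iff]
      constructor <;> · ring_nf; nlinarith
  have hrisk : tilRisk g lam P A D - tilRisk g lam P A D'
      = (1 / (n:ℝ)) * ∫ z, (lossFn g lam A z (D i) - lossFn g lam A z (D' i)) ∂P := by
    rw [tilRisk, tilRisk, ← mul_sub, hsum, hdiffint]
  rw [hrisk, abs_mul, abs_of_nonneg (by positivity : (0:ℝ) ≤ 1 / (n:ℝ))]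
  calc 1 / (n:ℝ) * |∫ z, (lossFn g lam A z (D i) - lossFn g lam A z (D' i)) ∂P|
      ≤ 1 / (n:ℝ) * (2 * C) := by
        apply mul_le_mul_of_nonneg_left hbound (by positivity)
    _ ≤ 4 * C / n := by
        rw [div_mul_eq_mul_div, one_mul]
        gcongr
        linarith


end
end
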